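/- Let Γ and Γ' = μ_k(Γ) be mutation-equivalent simply-laced diagrams (all edge weights 1). Then the underlying undirected graph of Γ' can be obtained from the underlying undirected graph of Γ by a sequence of basic moves; specifically, if c₁, …, c_r are the vertices with a weight-1 directed edge pointing toward k, then the underlying graph of μ_k(Γ) equals φ_{c_r,k} ∘ ⋯ ∘ φ_{c₁,k} applied to the underlying graph of Γ. -/

import Mathlib

open Finset

/-! A diagram on a vertex type `V` is encoded by a weight function `w : V → V → ℕ`:
`w i j` is the weight of the directed edge from `i` to `j` (`0` if there is no such
edge).  A genuine diagram is loopless and has at most one direction between any two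
vertices, and the product of the weights along any cycle is a perfect square. -/

/-- No loops. -/
def DiagLoopless {V : Type*} (w : V → V → ℕ) : Prop := ∀ i, w i i = 0

/-- Between any two vertices there is at most one directed edge. -/
def DiagOneDir {V : Type*} (w : V → V → ℕ) : Prop := ∀ i j, w i j = 0 ∨ w j i = 0

/-- The (undirected) weight of the edge between `i` and `j`. -/
def uw {V : Type*} (w : V → V → ℕ) (i j : V) : ℕ := w i j + w j i

/-- The product of the edge weights along any cycle (of length `≥ 3`) is a perfect
square. -/
def CycleSquare {V : Type*} (w : V → V → ℕ) : Prop :=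
  ∀ (m : ℕ) (v : Fin (m + 3) → V), Function.Injective v →
    (∀ t, uw w (v t) (v (t + 1)) ≠ 0) →
    ∃ s : ℕ, (∏ t : Fin (m + 3), uw w (v t) (v (t + 1))) = s ^ 2

/-- Fomin–Zelevinsky diagram mutation at the vertex `k`.  Edges incident to `k` are
reversed with their weights unchanged, and for every oriented two-edge path `i → k → j`
with weights `a`, `b`, the weight `c` of the edge between `i` and `j` is replaced by the
weight `c'` determined by `±√c ± √c' = √(ab)`, the sign before `√c` (resp. `√c'`) being
`+` exactly when `i,j,k` form an oriented cycle in `Γ` (resp. in `μ_k(Γ)`). -/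
def mutate {V : Type*} [DecidableEq V] (w : V → V → ℕ) (k : V) : V → V → ℕ :=
  fun i j =>
    if i = j then 0
    else if j = k then w k i
    else if i = k then w j k
    else if w i k ≠ 0 ∧ w k j ≠ 0 then
      -- oriented two-edge path `i → k → j`
      let a := w i k; let b := w k j; let c := w i j + w j i
      let s := Nat.sqrt (a * b * c)
      if w j i ≠ 0 then
        -- the triangle `i → k → j → i` is oriented in `Γ`: `c' = ab + c − 2√(abc)`,
        -- and the new edge goes from `i` to `j` exactly when `ab ≥ c`
        (if c ≤ a * b then a * b + c - 2 * s else 0)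
      else
        -- non-oriented (or no) triangle: `c' = ab + c + 2√(abc)`, new edge `i → j`
        a * b + c + 2 * s
    else if w j k ≠ 0 ∧ w k i ≠ 0 then
      -- oriented two-edge path `j → k → i`: the new edge goes from `j` to `i`
      -- unless the triangle was oriented in `Γ` with `ab < c`
      let a := w j k; let b := w k i; let c := w i j + w j i
      let s := Nat.sqrt (a * b * c)
      if w i j ≠ 0 ∧ a * b < c then a * b + c - 2 * s else 0
    else w i j

/-- Mutation equivalence of diagrams. -/
def MutEquiv {V : Type*} [DecidableEq V] (w w' : V → V → ℕ) : Prop :=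
  Relation.ReflTransGen (fun x y => ∃ k, y = mutate x k) w w'

/-- A diagram is 2-finite if every mutation-equivalent diagram has all edge weights in
`{1,2,3}`. -/
def TwoFinite {V : Type*} [DecidableEq V] (w : V → V → ℕ) : Prop :=
  ∀ w', MutEquiv w w' → ∀ i j, w' i j ≤ 3

/-- The subdiagram induced on a subset `S` of the vertices. -/
def restrictDiag {V : Type*} (w : V → V → ℕ) (S : Set V) : S → S → ℕ :=
  fun i j => w i j

/-- A diagram is minimal 2-infinite if it is 2-infinite and every proper induced
subdiagram is 2-finite. -/
def MinimalTwoInfinite {V : Type*} [DecidableEq V] (w : V → V → ℕ) : Prop :=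
  ¬ TwoFinite w ∧ ∀ S : Set V, S ≠ Set.univ → TwoFinite (restrictDiag w S)

/-- The underlying undirected graph of a diagram. -/
def toGraph {V : Type*} (w : V → V → ℕ) : SimpleGraph V where
  Adj i j := i ≠ j ∧ uw w i j ≠ 0
  symm := by
    constructor
    intro i j h
    refine ⟨h.1.symm, ?_⟩
    have h2 := h.2
    unfold uw at h2 ⊢
    omega
  loopless := by constructor; intro i h; exact h.1 rfl

/-- The mod-2 underlying graph of a diagram: `i ∼ j` iff the edge between them has odd
weight. -/
def toGraphMod2 {V : Type*} (w : V → V → ℕ) : SimpleGraph V where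
  Adj i j := i ≠ j ∧ Odd (uw w i j)
  symm := by
    constructor
    intro i j h
    refine ⟨h.1.symm, ?_⟩
    have h2 := h.2
    unfold uw at h2 ⊢
    rwa [Nat.add_comm]
  loopless := by constructor; intro i h; exact h.1 rfl

/-- The basic move `φ_{c,a}` on an undirected graph: the adjacency between `c` and each
neighbour `v ≠ c` of `a` is toggled, and all other edges are unchanged. -/
def basicMove {V : Type*} (G : SimpleGraph V) (c a : V) : SimpleGraph V where
  Adj u v := Xor' (G.Adj u v)
      ((u = c ∧ v ≠ c ∧ G.Adj a v) ∨ (v = c ∧ u ≠ c ∧ G.Adj a u))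
  symm := by
    constructor
    intro u v h
    show Xor' (G.Adj v u) _
    rw [G.adj_comm v u]
    unfold Xor' Xor at h ⊢
    tauto
  loopless := by
    constructor
    intro u h
    unfold Xor' Xor at h
    rcases h with ⟨h1, _⟩ | ⟨h1, _⟩
    · exact G.irrefl h1
    · rcases h1 with ⟨h2, h3, _⟩ | ⟨h2, h3, _⟩ <;> exact h3 h2

/-- One basic move applied to `G` (at a pair of adjacent vertices). -/
def BMStep {V : Type*} (G G' : SimpleGraph V) : Prop :=
  ∃ c a, G.Adj c a ∧ G' = basicMove G c a

/-- BM-equivalence: two graphs are related by a sequence of basic moves. -/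
def BMEquiv {V : Type*} (G G' : SimpleGraph V) : Prop :=
  Relation.ReflTransGen BMStep G G'

/-- The path (type `A_n`) graph on `n` vertices. -/
def dynA (n : ℕ) : SimpleGraph (Fin n) :=
  SimpleGraph.fromRel (fun i j => (i : ℕ) + 1 = (j : ℕ))

/-- The type `D_n` tree (`n ≥ 4`): a path `1 – 2 – ⋯ – (n−1)` with `0` attached to `2`. -/
def dynD (n : ℕ) : SimpleGraph (Fin n) :=
  SimpleGraph.fromRel (fun i j =>
    ((i : ℕ) = 0 ∧ (j : ℕ) = 2) ∨ ((i : ℕ) + 1 = (j : ℕ) ∧ 1 ≤ (i : ℕ)))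

/-- The type `E_n` tree (`n ∈ {6,7,8}`): a path `0 – 1 – ⋯ – (n−2)` with `n−1` attached
to `2`. -/
def dynE (n : ℕ) : SimpleGraph (Fin n) :=
  SimpleGraph.fromRel (fun i j =>
    ((i : ℕ) + 1 = (j : ℕ) ∧ (j : ℕ) ≤ n - 2) ∨ ((i : ℕ) = 2 ∧ (j : ℕ) = n - 1))

/-- `G` is (isomorphic to) a simply-laced Dynkin graph: type `A`, `D` or `E`. -/
def IsDynkinADE {V : Type*} (G : SimpleGraph V) : Prop :=
  (∃ n, 1 ≤ n ∧ Nonempty (G ≃g dynA n)) ∨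
  (∃ n, 4 ≤ n ∧ Nonempty (G ≃g dynD n)) ∨
  (∃ n, (n = 6 ∨ n = 7 ∨ n = 8) ∧ Nonempty (G ≃g dynE n))

/-- `v` enumerates an induced cycle (of length `m + 3`) in the diagram `w`. -/
def InducedCycleOn {V : Type*} (w : V → V → ℕ) {m : ℕ} (v : Fin (m + 3) → V) : Prop :=
  Function.Injective v ∧
    ∀ s t : Fin (m + 3), s ≠ t → (uw w (v s) (v t) ≠ 0 ↔ (t = s + 1 ∨ s = t + 1))

/-- The diagram contains a non-oriented (induced) cycle as a subdiagram. -/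
def HasNonorientedCycle {V : Type*} (w : V → V → ℕ) : Prop :=
  ∃ (m : ℕ) (v : Fin (m + 3) → V), InducedCycleOn w v ∧
    ¬ ((∀ t, w (v t) (v (t + 1)) ≠ 0) ∨ (∀ t, w (v (t + 1)) (v t) ≠ 0))

/-! For simply-laced diagrams, mutation at `k` toggles the edge `{u, v}` exactly when there is
an oriented path `u → k → v`: an oriented triangle loses its third edge, a missing third edge
appears, and a non-oriented triangle would yield an edge of weight `4`, which simply-lacedness of
`μ_k(Γ)` excludes. Each move `φ_{c,k}` leaves the neighbourhood of `k` unchanged, so the composed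
moves toggle `{u, v}` once for each endpoint pointing into `k` whose partner is a neighbour of `k`;
when both endpoints point into `k` the two toggles cancel, and otherwise this is the two-path
condition. -/

section BasicMove

variable {V : Type*} (G : SimpleGraph V) (a : V)

theorem basicMove_adj {c u v : V} :
    (basicMove G c a).Adj u v ↔
      Xor (G.Adj u v) ((u = c ∧ v ≠ c ∧ G.Adj a v) ∨ (v = c ∧ u ≠ c ∧ G.Adj a u)) :=
  Iff.rfl

theorem basicMove_adj_center {c : V} (hc : c ≠ a) : (basicMove G c a).Adj a = G.Adj a := by
  ext v
  simp [basicMove_adj, xor_def, hc.symm]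

theorem foldl_basicMove_adj {L : List V} (hL : L.Nodup) (ha : a ∉ L) (u v : V) :
    (L.foldl (fun G c => basicMove G c a) G).Adj u v ↔
      Xor (G.Adj u v) (Xor (u ∈ L ∧ u ≠ v ∧ G.Adj a v) (v ∈ L ∧ u ≠ v ∧ G.Adj a u)) := by
  induction L generalizing G with
  | nil => simp [xor_def]
  | cons c L ih =>
    obtain ⟨hcL, hL⟩ := List.nodup_cons.mp hL
    obtain ⟨hca, ha⟩ := not_or.mp (List.mem_cons.not.mp ha)
    rw [List.foldl_cons, ih _ hL ha, basicMove_adj_center G a (Ne.symm hca), basicMove_adj]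
    simp only [List.mem_cons]
    grind

end BasicMove

section Diagram

variable {V : Type*} {w : V → V → ℕ} {k : V}

def IsSimplyLaced (w : V → V → ℕ) : Prop := ∀ i j, w i j ≤ 1

theorem uw_comm (w : V → V → ℕ) (i j : V) : uw w i j = uw w j i := Nat.add_comm _ _

theorem toGraph_adj {u v : V} : (toGraph w).Adj u v ↔ u ≠ v ∧ uw w u v ≠ 0 := Iff.rfl

theorem twoPath_iff_xor (hloop : DiagLoopless w) (hdir : DiagOneDir w) (u v : V) :
    ((w u k ≠ 0 ∧ w k v ≠ 0) ∨ (w v k ≠ 0 ∧ w k u ≠ 0)) ↔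
      Xor (w u k ≠ 0 ∧ u ≠ v ∧ (toGraph w).Adj k v) (w v k ≠ 0 ∧ u ≠ v ∧ (toGraph w).Adj k u) := by
  have := hloop k; have := hdir u k; have := hdir v k
  grind [toGraph_adj, uw]

end Diagram

section Mutation

variable {V : Type*} [DecidableEq V] {w : V → V → ℕ} {k : V}

theorem uw_mutate_center {v : V} (hv : v ≠ k) : uw (mutate w k) k v = uw w k v := by
  simp [uw, mutate, hv, hv.symm, Nat.add_comm]

theorem mutate_eq_of_not_twoPath {i j : V} (hij : i ≠ j) (hi : i ≠ k) (hj : j ≠ k)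
    (hij' : ¬(w i k ≠ 0 ∧ w k j ≠ 0)) (hji' : ¬(w j k ≠ 0 ∧ w k i ≠ 0)) :
    mutate w k i j = w i j := by
  simp only [mutate, if_neg hij, if_neg hi, if_neg hj, if_neg hij', if_neg hji']

theorem uw_mutate_ne_zero_iff_of_twoPath (hdir : DiagOneDir w) (hsl : IsSimplyLaced w)
    (hsl' : IsSimplyLaced (mutate w k)) {i j : V} (hij : i ≠ j) (hi : i ≠ k) (hj : j ≠ k)
    (hik : w i k ≠ 0) (hkj : w k j ≠ 0) :
    uw (mutate w k) i j ≠ 0 ↔ uw w i j = 0 := by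
  have hik1 : w i k = 1 := by have := hsl i k; omega
  have hkj1 : w k j = 1 := by have := hsl k j; omega
  have hki : w k i = 0 := (hdir i k).resolve_left hik
  have hjk : w j k = 0 := (hdir k j).resolve_left hkj
  have hsl'ij := hsl' i j
  have hc : (w i j = 0 ∧ w j i = 0) ∨ (w i j = 1 ∧ w j i = 0) ∨ (w i j = 0 ∧ w j i = 1) := by
    have := hsl i j; have := hsl j i; have := hdir i j; omega
  rcases hc with ⟨h1, h2⟩ | ⟨h1, h2⟩ | ⟨h1, h2⟩ <;>
    simp [uw, mutate, hij, Ne.symm hij, hi, hj, hik1, hkj1, hki, hjk, h1, h2] at hsl'ij ⊢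

theorem toGraph_mutate_adj (hloop : DiagLoopless w) (hdir : DiagOneDir w)
    (hsl : IsSimplyLaced w) (hsl' : IsSimplyLaced (mutate w k)) (u v : V) :
    (toGraph (mutate w k)).Adj u v ↔
      Xor ((toGraph w).Adj u v) ((w u k ≠ 0 ∧ w k v ≠ 0) ∨ (w v k ≠ 0 ∧ w k u ≠ 0)) := by
  have hk := hloop k
  rcases eq_or_ne u v with rfl | huv
  · have := hdir u k
    grind [toGraph_adj]
  rcases eq_or_ne u k with rfl | huk
  · simp [toGraph_adj, huv, uw_mutate_center huv.symm, hk]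
  rcases eq_or_ne v k with rfl | hvk
  · simp [toGraph_adj, huv, uw_comm _ u v, uw_mutate_center huv, hk]
  by_cases hpath : w u k ≠ 0 ∧ w k v ≠ 0
  · have hrev : ¬(w v k ≠ 0 ∧ w k u ≠ 0) := fun h => h.2 ((hdir u k).resolve_left hpath.1)
    simp [toGraph_adj, huv, hpath, hrev, xor_def,
      uw_mutate_ne_zero_iff_of_twoPath hdir hsl hsl' huv huk hvk hpath.1 hpath.2]
  by_cases hpath' : w v k ≠ 0 ∧ w k u ≠ 0
  · have hrev : ¬(w u k ≠ 0 ∧ w k v ≠ 0) := fun h => h.2 ((hdir v k).resolve_left hpath'.1)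
    simp [toGraph_adj, huv, uw_comm _ u v, hpath', hrev, xor_def,
      uw_mutate_ne_zero_iff_of_twoPath hdir hsl hsl' huv.symm hvk huk hpath'.1 hpath'.2]
  · have h1 := mutate_eq_of_not_twoPath huv huk hvk hpath hpath'
    have h2 := mutate_eq_of_not_twoPath huv.symm hvk huk hpath' hpath
    simp [toGraph_adj, uw, h1, h2, hpath, hpath', xor_def]

end Mutation

theorem stmt11_general {V : Type*} [DecidableEq V] (w : V → V → ℕ) (k : V)
    (hloop : DiagLoopless w) (hdir : DiagOneDir w)
    (hsl : ∀ i j, w i j ≤ 1) (hsl' : ∀ i j, mutate w k i j ≤ 1)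
    (L : List V) (hnodup : L.Nodup) (hmem : ∀ c, c ∈ L ↔ w c k ≠ 0) :
    toGraph (mutate w k) = L.foldl (fun G c => basicMove G c k) (toGraph w) := by
  have hkL : k ∉ L := fun h => (hmem k).mp h (hloop k)
  ext u v
  rw [toGraph_mutate_adj hloop hdir hsl hsl' u v, foldl_basicMove_adj _ k hnodup hkL, hmem, hmem,
    twoPath_iff_xor hloop hdir]

/-- If `Γ` and `Γ' = μ_k(Γ)` are simply-laced diagrams, then the underlying graph of
`μ_k(Γ)` is obtained from the underlying graph of `Γ` by the sequence of basic moves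
`φ_{c_r,k} ∘ ⋯ ∘ φ_{c₁,k}`, where `c₁, …, c_r` are the vertices with a (weight-1)
directed edge pointing toward `k`. -/
theorem stmt11 {V : Type*} [DecidableEq V] (w : V → V → ℕ) (k : V)
    (hloop : DiagLoopless w) (hdir : DiagOneDir w) (hsq : CycleSquare w)
    (hsl : ∀ i j, w i j ≤ 1) (hsl' : ∀ i j, mutate w k i j ≤ 1)
    (L : List V) (hnodup : L.Nodup) (hmem : ∀ c, c ∈ L ↔ w c k ≠ 0) :
    toGraph (mutate w k) = L.foldl (fun G c => basicMove G c k) (toGraph w) :=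
  stmt11_general w k hloop hdir hsl hsl' L hnodup hmem
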